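/- arXiv:1811.04204 — 2 statements merged into one kernel-verified Lean document; each statement's English description precedes it below -/
import Mathlib

section
/- Let n ≥ 2 and let u : EuclideanSpace ℝ (Fin n) → ℝ be twice continuously differentiable and harmonic on an open set Ω, with ∇u(p) ≠ 0 for all p ∈ Ω. Let φ : ℝ → EuclideanSpace ℝ (Fin n) be a unit-speed gradient flow line: φ maps an interval [0, L] into Ω, and for every s ∈ [0, L], φ'(s) = N(φ(s)) where N(p) = ∇u(p)/‖∇u(p)‖. Then for every s ∈ [0, L], ‖∇u(φ(s))‖ = ‖∇u(φ(0))‖ · exp((n − 1) ∫₀ˢ H(φ(t)) dt), where H(p) = (Q(p)(N(p), N(p)) − Δu(p)) / ((n − 1)‖∇u(p)‖) is the mean curvature of the level hypersurface of u through p. -/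
/-!
Along a unit-speed gradient line the chain rule gives `d/ds ∇u(φ) = D²u(φ) N`, hence
`d/ds ‖∇u(φ)‖ = ⟪N, D²u(φ) N⟫ = Q(N, N)`. For harmonic `u` the definition of `H` reads
`Q(N, N) = (n - 1) H ‖∇u‖`, so `log ‖∇u(φ)‖` has derivative `(n - 1) H(φ)`, and the formula is
the fundamental theorem of calculus for it.
-/

open Set

/-- The Hessian bilinear form of `u` at `p`, applied to `(v, w)`:
the second Fréchet derivative. -/
noncomputable def hessianForm {n : ℕ} (u : EuclideanSpace ℝ (Fin n) → ℝ)
    (p v w : EuclideanSpace ℝ (Fin n)) : ℝ :=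
  fderiv ℝ (fderiv ℝ u) p v w

/-- The Laplacian of `u` at `p`: the trace of the Hessian. -/
noncomputable def laplacianAt {n : ℕ} (u : EuclideanSpace ℝ (Fin n) → ℝ)
    (p : EuclideanSpace ℝ (Fin n)) : ℝ :=
  ∑ i, hessianForm u p (EuclideanSpace.single i 1) (EuclideanSpace.single i 1)

/-- The unit normal `N(p) = ∇u(p)/‖∇u(p)‖` to the level hypersurface of `u` through `p`. -/
noncomputable def unitNormal {n : ℕ} (u : EuclideanSpace ℝ (Fin n) → ℝ)
    (p : EuclideanSpace ℝ (Fin n)) : EuclideanSpace ℝ (Fin n) :=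
  ‖gradient u p‖⁻¹ • gradient u p

/-- The mean curvature `H(p)` of the level hypersurface of `u` through `p`, oriented by `N`. -/
noncomputable def meanCurvature {n : ℕ} (u : EuclideanSpace ℝ (Fin n) → ℝ)
    (p : EuclideanSpace ℝ (Fin n)) : ℝ :=
  (hessianForm u p (unitNormal u p) (unitNormal u p) - laplacianAt u p) /
    (((n : ℝ) - 1) * ‖gradient u p‖)

open MeasureTheory
open scoped InnerProductSpace

theorem HasDerivAt.norm_of_ne_zero {E : Type*} [NormedAddCommGroup E] [InnerProductSpace ℝ E]
    {γ : ℝ → E} {v : E} {t : ℝ} (hγ : HasDerivAt γ v t) (h0 : γ t ≠ 0) :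
    HasDerivAt (fun r => ‖γ r‖) (⟪γ t, v⟫_ℝ / ‖γ t‖) t := by
  have hsq : ‖γ t‖ ^ 2 ≠ 0 := by positivity
  convert hγ.norm_sq.sqrt hsq using 1
  · simp only [Real.sqrt_sq (norm_nonneg _)]
  · rw [Real.sqrt_sq (norm_nonneg _)]
    ring

theorem hasDerivAt_gradient_comp {E : Type*} [NormedAddCommGroup E] [InnerProductSpace ℝ E]
    [CompleteSpace E] {u : E → ℝ} {γ : ℝ → E} {v : E} {t : ℝ}
    (hu : DifferentiableAt ℝ (fderiv ℝ u) (γ t)) (hγ : HasDerivAt γ v t) :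
    HasDerivAt (fun r => gradient u (γ r))
      ((InnerProductSpace.toDual ℝ E).symm (fderiv ℝ (fderiv ℝ u) (γ t) v)) t :=
  ((InnerProductSpace.toDual ℝ E).symm.toContinuousLinearEquiv.hasFDerivAt.comp_hasDerivAt t
    (hu.hasFDerivAt.comp_hasDerivAt t hγ) : _)

theorem eq_mul_exp_integral_of_hasDerivAt {f k : ℝ → ℝ} {a b : ℝ}
    (hpos : ∀ x ∈ uIcc a b, 0 < f x) (hderiv : ∀ x ∈ uIcc a b, HasDerivAt f (k x * f x) x)
    (hint : IntervalIntegrable k volume a b) :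
    f b = f a * Real.exp (∫ x in a..b, k x) := by
  have hlog : ∀ x ∈ uIcc a b, HasDerivAt (fun y => Real.log (f y)) (k x) x := fun x hx => by
    simpa [(hpos x hx).ne'] using (hderiv x hx).log (hpos x hx).ne'
  rw [intervalIntegral.integral_eq_sub_of_hasDerivAt hlog hint, Real.exp_sub,
    Real.exp_log (hpos a left_mem_uIcc), Real.exp_log (hpos b right_mem_uIcc)]
  field_simp [(hpos a left_mem_uIcc).ne']

theorem hasDerivAt_norm_gradient_comp {E : Type*} [NormedAddCommGroup E] [InnerProductSpace ℝ E]
    [CompleteSpace E] {u : E → ℝ} {γ : ℝ → E} {v : E} {t : ℝ}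
    (hu : DifferentiableAt ℝ (fderiv ℝ u) (γ t)) (hγ : HasDerivAt γ v t)
    (hg : gradient u (γ t) ≠ 0) :
    HasDerivAt (fun r => ‖gradient u (γ r)‖)
      (fderiv ℝ (fderiv ℝ u) (γ t) v (‖gradient u (γ t)‖⁻¹ • gradient u (γ t))) t := by
  convert (hasDerivAt_gradient_comp hu hγ).norm_of_ne_zero hg using 1
  rw [real_inner_comm, InnerProductSpace.toDual_symm_apply, map_smul, smul_eq_mul,
    div_eq_inv_mul]

section EuclideanSpace

variable {n : ℕ} {u : EuclideanSpace ℝ (Fin n) → ℝ} {Ω : Set (EuclideanSpace ℝ (Fin n))}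

theorem hessianForm_unitNormal_self {p : EuclideanSpace ℝ (Fin n)} (hn : (n : ℝ) - 1 ≠ 0)
    (hg : gradient u p ≠ 0) :
    hessianForm u p (unitNormal u p) (unitNormal u p) =
      ((n : ℝ) - 1) * meanCurvature u p * ‖gradient u p‖ + laplacianAt u p := by
  have : ‖gradient u p‖ ≠ 0 := norm_ne_zero_iff.2 hg
  rw [meanCurvature]
  field_simp
  ring

theorem continuousOn_gradient (hΩ : IsOpen Ω) (hu : ContDiffOn ℝ 1 u Ω) :
    ContinuousOn (gradient u) Ω :=
  (InnerProductSpace.toDual ℝ _).symm.continuous.comp_continuousOn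
    (hu.continuousOn_fderiv_of_isOpen hΩ le_rfl)

theorem continuousOn_unitNormal (hΩ : IsOpen Ω) (hu : ContDiffOn ℝ 1 u Ω)
    (hg : ∀ p ∈ Ω, gradient u p ≠ 0) : ContinuousOn (unitNormal u) Ω :=
  ((continuousOn_gradient hΩ hu).norm.inv₀ fun p hp => norm_ne_zero_iff.2 (hg p hp)).smul
    (continuousOn_gradient hΩ hu)

theorem continuousOn_hessianForm (hΩ : IsOpen Ω) (hu : ContDiffOn ℝ 2 u Ω)
    {v w : EuclideanSpace ℝ (Fin n) → EuclideanSpace ℝ (Fin n)} (hv : ContinuousOn v Ω)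
    (hw : ContinuousOn w Ω) : ContinuousOn (fun p => hessianForm u p (v p) (w p)) Ω :=
  ((((hu.fderiv_of_isOpen hΩ (by norm_num : (1 : WithTop ℕ∞) + 1 ≤ 2)).continuousOn_fderiv_of_isOpen
    hΩ le_rfl).clm_apply hv).clm_apply hw)

theorem continuousOn_laplacianAt (hΩ : IsOpen Ω) (hu : ContDiffOn ℝ 2 u Ω) :
    ContinuousOn (laplacianAt u) Ω :=
  continuousOn_finsetSum _ fun _ _ =>
    continuousOn_hessianForm hΩ hu continuousOn_const continuousOn_const

theorem continuousOn_meanCurvature (hΩ : IsOpen Ω) (hu : ContDiffOn ℝ 2 u Ω)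
    (hg : ∀ p ∈ Ω, gradient u p ≠ 0) : ContinuousOn (meanCurvature u) Ω := by
  have hN := continuousOn_unitNormal hΩ (hu.of_le one_le_two) hg
  have hH : meanCurvature u = fun p =>
      (hessianForm u p (unitNormal u p) (unitNormal u p) - laplacianAt u p) / ((n : ℝ) - 1) /
        ‖gradient u p‖ := by
    funext p
    rw [meanCurvature, div_mul_eq_div_div]
  rw [hH]
  exact (((continuousOn_hessianForm hΩ hu hN hN).sub (continuousOn_laplacianAt hΩ hu)).div_const
    _).div (continuousOn_gradient hΩ (hu.of_le one_le_two)).norm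
    fun p hp => norm_ne_zero_iff.2 (hg p hp)

end EuclideanSpace

theorem gradient_norm_eq_exp_integral_meanCurvature
    (n : ℕ) (hn : 2 ≤ n)
    (u : EuclideanSpace ℝ (Fin n) → ℝ)
    (Ω : Set (EuclideanSpace ℝ (Fin n))) (hΩ : IsOpen Ω)
    (hu : ContDiffOn ℝ 2 u Ω)
    (hharm : ∀ p ∈ Ω, laplacianAt u p = 0)
    (hgrad : ∀ p ∈ Ω, gradient u p ≠ 0)
    (φ : ℝ → EuclideanSpace ℝ (Fin n)) (L : ℝ)
    (hmap : ∀ s ∈ Icc (0 : ℝ) L, φ s ∈ Ω)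
    (hflow : ∀ s ∈ Icc (0 : ℝ) L, HasDerivAt φ (unitNormal u (φ s)) s)
    (s : ℝ) (hs : s ∈ Icc (0 : ℝ) L) :
    ‖gradient u (φ s)‖ = ‖gradient u (φ 0)‖ *
      Real.exp (((n : ℝ) - 1) * ∫ t in (0 : ℝ)..s, meanCurvature u (φ t)) := by
  have hn1 : (n : ℝ) - 1 ≠ 0 := by
    have : (2 : ℝ) ≤ n := by exact_mod_cast hn
    linarith
  have hsub : uIcc 0 s ⊆ Icc 0 L := uIcc_subset_Icc (left_mem_Icc.2 (hs.1.trans hs.2)) hs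
  have hD2 : DifferentiableOn ℝ (fderiv ℝ u) Ω :=
    (hu.fderiv_of_isOpen hΩ (by norm_num : (1 : WithTop ℕ∞) + 1 ≤ 2)).differentiableOn
      one_ne_zero
  have hderiv : ∀ t ∈ uIcc 0 s, HasDerivAt (fun r => ‖gradient u (φ r)‖)
      (((n : ℝ) - 1) * meanCurvature u (φ t) * ‖gradient u (φ t)‖) t := fun t ht => by
    have hp := hmap t (hsub ht)
    have hQ := hessianForm_unitNormal_self hn1 (hgrad _ hp)
    rw [hharm _ hp, add_zero] at hQ
    rw [← hQ]
    exact hasDerivAt_norm_gradient_comp ((hD2 _ hp).differentiableAt (hΩ.mem_nhds hp))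
      (hflow t (hsub ht)) (hgrad _ hp)
  have hφ : ContinuousOn φ (uIcc 0 s) := fun t ht =>
    (hflow t (hsub ht)).continuousAt.continuousWithinAt
  have hint : IntervalIntegrable (fun t => ((n : ℝ) - 1) * meanCurvature u (φ t)) volume 0 s :=
    (continuousOn_const.mul ((continuousOn_meanCurvature hΩ hu hgrad).comp hφ
      fun t ht => hmap t (hsub ht))).intervalIntegrable
  rw [eq_mul_exp_integral_of_hasDerivAt (fun t ht => norm_pos_iff.2 (hgrad _ (hmap t (hsub ht))))
    hderiv hint, intervalIntegral.integral_const_mul]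
end

section
/- Let n ≥ 2 and let u : EuclideanSpace ℝ (Fin n) → ℝ be twice continuously differentiable and harmonic on an open set Ω, with ∇u(p) ≠ 0 for all p ∈ Ω. Let φ map an interval [0, L] into Ω and satisfy φ'(s) = N(φ(s)) for all s ∈ [0, L], where N(p) = ∇u(p)/‖∇u(p)‖. Then the function s ↦ log ‖∇u(φ(s))‖ is differentiable on [0, L] and its derivative at s equals (n − 1) · H(φ(s)), where H(p) = (Q(p)(N(p), N(p)) − Δu(p)) / ((n − 1)‖∇u(p)‖). -/
open Set

/-! Along an integral curve of `N`, the chain rule gives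
`(log ‖∇u‖)' = ⟪∇u, D²u N⟫ / ‖∇u‖² = Q(N, ∇u) / ‖∇u‖² = Q(N, N) / ‖∇u‖`, using `∇u = ‖∇u‖ N`.
Since `u` is harmonic, `(n - 1) H = (Q(N, N) - Δu) / ‖∇u‖` is the same quantity. -/

open InnerProductSpace
open scoped RealInnerProductSpace

theorem HasDerivAt.log_norm {F : Type*} [NormedAddCommGroup F] [InnerProductSpace ℝ F]
    {f : ℝ → F} {f' : F} {x : ℝ} (hf : HasDerivAt f f' x) (hx : f x ≠ 0) :
    HasDerivAt (fun t => Real.log ‖f t‖) (⟪f x, f'⟫ / ‖f x‖ ^ 2) x := by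
  have h := (hf.norm_sq.log (pow_ne_zero 2 (norm_ne_zero_iff.2 hx))).div_const 2
  have hlog : (fun t => Real.log ‖f t‖) = fun t => Real.log (‖f t‖ ^ 2) / 2 := by
    ext t; rw [Real.log_pow]; push_cast; ring
  exact hlog ▸ h.congr_deriv (by ring)

section Gradient

variable {F : Type*} [NormedAddCommGroup F] [InnerProductSpace ℝ F] [CompleteSpace F]
  {f : F → ℝ} {x : F}

theorem hasFDerivAt_gradient (hf : DifferentiableAt ℝ (fderiv ℝ f) x) :
    HasFDerivAt (gradient f)
      ((toDual ℝ F).symm.toContinuousLinearEquiv.toContinuousLinearMap ∘L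
        fderiv ℝ (fderiv ℝ f) x) x :=
  (toDual ℝ F).symm.toContinuousLinearEquiv.hasFDerivAt.comp x hf.hasFDerivAt

theorem HasDerivAt.log_norm_gradient_comp {γ : ℝ → F} {v : F} {s : ℝ} (hγ : HasDerivAt γ v s)
    (hf : DifferentiableAt ℝ (fderiv ℝ f) (γ s)) (h0 : gradient f (γ s) ≠ 0) :
    HasDerivAt (fun t => Real.log ‖gradient f (γ t)‖)
      (fderiv ℝ (fderiv ℝ f) (γ s) v (gradient f (γ s)) / ‖gradient f (γ s)‖ ^ 2) s := by
  have h := HasDerivAt.log_norm ((hasFDerivAt_gradient hf).comp_hasDerivAt s hγ) h0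
  rw [ContinuousLinearMap.comp_apply, real_inner_comm] at h
  exact h.congr_deriv (congrArg (· / _) toDual_symm_apply)

end Gradient

section LevelSets

variable {n : ℕ} (u : EuclideanSpace ℝ (Fin n) → ℝ) (p : EuclideanSpace ℝ (Fin n))

theorem norm_gradient_smul_unitNormal : ‖gradient u p‖ • unitNormal u p = gradient u p := by
  rcases eq_or_ne (gradient u p) 0 with h | h
  · simp [unitNormal, h]
  · exact smul_inv_smul₀ (norm_ne_zero_iff.2 h) _

theorem hessianForm_unitNormal_gradient_div_norm_sq (h : gradient u p ≠ 0) :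
    hessianForm u p (unitNormal u p) (gradient u p) / ‖gradient u p‖ ^ 2 =
      hessianForm u p (unitNormal u p) (unitNormal u p) / ‖gradient u p‖ := by
  have hg : ‖gradient u p‖ ≠ 0 := norm_ne_zero_iff.2 h
  have hlin : hessianForm u p (unitNormal u p) (gradient u p) =
      ‖gradient u p‖ * hessianForm u p (unitNormal u p) (unitNormal u p) := by
    conv_lhs => rw [← norm_gradient_smul_unitNormal u p]
    exact map_smul _ _ _
  rw [hlin]
  field_simp

theorem sub_one_mul_meanCurvature (hn : n ≠ 1) :
    ((n : ℝ) - 1) * meanCurvature u p =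
      (hessianForm u p (unitNormal u p) (unitNormal u p) - laplacianAt u p) / ‖gradient u p‖ := by
  have hn' : (n : ℝ) - 1 ≠ 0 := sub_ne_zero.2 (by exact_mod_cast hn)
  rw [meanCurvature, ← mul_div_assoc, mul_div_mul_left _ _ hn']

end LevelSets

theorem hasDerivAt_log_norm_gradient_eq_meanCurvature
    (n : ℕ) (hn : 2 ≤ n)
    (u : EuclideanSpace ℝ (Fin n) → ℝ)
    (Ω : Set (EuclideanSpace ℝ (Fin n))) (hΩ : IsOpen Ω)
    (hu : ContDiffOn ℝ 2 u Ω)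
    (hharm : ∀ p ∈ Ω, laplacianAt u p = 0)
    (hgrad : ∀ p ∈ Ω, gradient u p ≠ 0)
    (φ : ℝ → EuclideanSpace ℝ (Fin n)) (L : ℝ)
    (hmap : ∀ s ∈ Icc (0 : ℝ) L, φ s ∈ Ω)
    (hflow : ∀ s ∈ Icc (0 : ℝ) L, HasDerivAt φ (unitNormal u (φ s)) s) :
    ∀ s ∈ Icc (0 : ℝ) L,
      HasDerivAt (fun t => Real.log ‖gradient u (φ t)‖)
        (((n : ℝ) - 1) * meanCurvature u (φ s)) s := by
  intro s hs
  have hpΩ : φ s ∈ Ω := hmap s hs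
  have hdiff : DifferentiableAt ℝ (fderiv ℝ u) (φ s) :=
    ((hu.contDiffAt (hΩ.mem_nhds hpΩ)).fderiv_right (by norm_num)).differentiableAt one_ne_zero
  have hlog := (hflow s hs).log_norm_gradient_comp hdiff (hgrad _ hpΩ)
  rw [sub_one_mul_meanCurvature u _ (by omega), hharm _ hpΩ, sub_zero,
    ← hessianForm_unitNormal_gradient_div_norm_sq u _ (hgrad _ hpΩ)]
  exact hlog
end
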